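/- arXiv:2509.06769 — 3 statements merged into one kernel-verified Lean document; each statement's English description precedes it below -/
import Mathlib

section
/- Let A be a type and F : SingleObj(FreeMonoid A) ⥤ Type a functor, i.e. a set equipped with an action of the free monoid on A. Then the category of elements of F is a free category: it is equivalent to the path category Paths(G) of the quiver G whose vertices are the elements x of the underlying set F(⋆) and whose arrows x → y are the letters a : A such that the action of the one-letter word of a sends x to y, i.e. F.map(FreeMonoid.of a)(x) = y. -/
open CategoryTheory

namespace FreeMonoidElementsAux

variable (A : Type) (F : SingleObj (FreeMonoid A) ⥤ Type)

local instance q : Quiver (F.obj (SingleObj.star (FreeMonoid A))) :=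
  ⟨fun x y =>
    {a : A // F.map (SingleObj.toEnd (FreeMonoid A) (FreeMonoid.of a)) x = y}⟩

/-- auxiliary prefunctor -/
def φ : Prefunctor (F.obj (SingleObj.star (FreeMonoid A))) F.Elements where
  obj x := ⟨SingleObj.star _, x⟩
  map {_ _} a := ⟨SingleObj.toEnd _ (FreeMonoid.of a.1), a.2⟩

def Φ : Paths (F.obj (SingleObj.star (FreeMonoid A))) ⥤ F.Elements := Paths.lift (φ A F)

variable {A F}

lemma act_cons (a : A) (t : List A) (x : F.obj (SingleObj.star (FreeMonoid A))) :
    F.map (SingleObj.toEnd _ (FreeMonoid.ofList (a :: t))) x =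
      F.map (SingleObj.toEnd _ (FreeMonoid.of a))
        (F.map (SingleObj.toEnd _ (FreeMonoid.ofList t)) x) := by
  rw [FreeMonoid.ofList_cons, map_mul]
  have : (SingleObj.toEnd (FreeMonoid A) (FreeMonoid.of a)) *
      (SingleObj.toEnd (FreeMonoid A) (FreeMonoid.ofList t)) =
      (SingleObj.toEnd (FreeMonoid A) (FreeMonoid.ofList t)) ≫
      (SingleObj.toEnd (FreeMonoid A) (FreeMonoid.of a)) := rfl
  rw [this, F.map_comp]
  rfl

lemma act_nil (x : F.obj (SingleObj.star (FreeMonoid A))) :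
    F.map (SingleObj.toEnd _ (FreeMonoid.ofList ([] : List A))) x = x := by
  have : SingleObj.toEnd (FreeMonoid A) (FreeMonoid.ofList []) =
      𝟙 (SingleObj.star (FreeMonoid A)) := rfl
  rw [this, F.map_id]
  rfl

/-- turn a word acting appropriately into a path -/
def pathOf : (l : List A) → (x y : F.obj (SingleObj.star (FreeMonoid A))) →
    F.map (SingleObj.toEnd _ (FreeMonoid.ofList l)) x = y → Quiver.Path x y
  | [], x, _, h => Eq.rec (motive := fun z _ => Quiver.Path x z) Quiver.Path.nil
      ((act_nil x).symm.trans h)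
  | (a :: t), x, y, h =>
    Quiver.Path.cons (pathOf t x _ rfl) (⟨a, (act_cons a t x) ▸ h⟩ : _ ⟶ y)

/-- word of a path -/
def wordOf : ∀ {x y : F.obj (SingleObj.star (FreeMonoid A))}, Quiver.Path x y → List A
  | _, _, Quiver.Path.nil => []
  | _, _, Quiver.Path.cons p e => e.1 :: wordOf p

lemma act_wordOf : ∀ {x y : F.obj (SingleObj.star (FreeMonoid A))} (p : Quiver.Path x y),
    F.map (SingleObj.toEnd _ (FreeMonoid.ofList (wordOf p))) x = y
  | _, _, Quiver.Path.nil => by rw [wordOf]; exact act_nil _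
  | _, _, Quiver.Path.cons p e => by
      rw [wordOf, act_cons, act_wordOf p]; exact e.2

lemma Φ_map_val : ∀ {x y : F.obj (SingleObj.star (FreeMonoid A))} (p : Quiver.Path x y),
    ((Φ A F).map p).1 = SingleObj.toEnd _ (FreeMonoid.ofList (wordOf p))
  | _, _, Quiver.Path.nil => by rw [wordOf]; rfl
  | _, _, Quiver.Path.cons p e => by
      rw [wordOf, FreeMonoid.ofList_cons, map_mul, ← Φ_map_val p]
      rfl

lemma wordOf_pathOf : ∀ (l : List A) (x y : F.obj (SingleObj.star (FreeMonoid A)))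
    (h : F.map (SingleObj.toEnd _ (FreeMonoid.ofList l)) x = y),
    wordOf (pathOf l x y h) = l
  | [], x, y, h => by
      obtain rfl : x = y := by rw [← h, act_nil]
      show wordOf (Eq.rec (motive := fun z _ => Quiver.Path x z) Quiver.Path.nil
        ((act_nil x).symm.trans h)) = []
      generalize (act_nil x).symm.trans h = pf
      cases pf
      with_unfolding_all rfl
  | (a :: t), x, y, h => by rw [pathOf, wordOf, wordOf_pathOf]

lemma path_eq : ∀ {x y : F.obj (SingleObj.star (FreeMonoid A))} (p q : Quiver.Path x y),
    wordOf p = wordOf q → p = q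
  | _, _, Quiver.Path.nil, Quiver.Path.nil, _ => rfl
  | _, _, Quiver.Path.nil, Quiver.Path.cons q f, hw => by
      rw [wordOf, wordOf] at hw; exact absurd hw (by simp)
  | _, _, Quiver.Path.cons p e, Quiver.Path.nil, hw => by
      rw [wordOf, wordOf] at hw; exact absurd hw (by simp)
  | x, y, @Quiver.Path.cons _ _ _ z₁ _ p e, @Quiver.Path.cons _ _ _ z₂ _ q f, hw => by
      rw [wordOf, wordOf, List.cons_eq_cons] at hw
      obtain ⟨h1, h2⟩ := hw
      obtain rfl : z₁ = z₂ := by rw [← act_wordOf p, ← act_wordOf q, h2]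
      rw [path_eq p q h2]
      congr 1
      exact Subtype.ext h1

instance : (Φ A F).Faithful where
  map_injective {x y} p q h := by
    apply path_eq
    have : ((Φ A F).map p).1 = ((Φ A F).map q).1 := by rw [h]
    rw [show ((Φ A F).map p).1 = _ from Φ_map_val p, show ((Φ A F).map q).1 = _ from Φ_map_val q] at this
    exact FreeMonoid.ofList.injective ((SingleObj.toEnd (FreeMonoid A)).injective this)

instance : (Φ A F).Full where
  map_surjective {x y} f := by
    have hf : F.map (SingleObj.toEnd _ (FreeMonoid.ofList (FreeMonoid.toList f.1))) x = y := by
      rw [FreeMonoid.ofList_toList, SingleObj.toEnd_def]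
      exact f.2
    refine ⟨pathOf (FreeMonoid.toList f.1) x y hf, Subtype.ext ?_⟩
    refine (Φ_map_val _).trans ?_
    rw [show wordOf (pathOf (FreeMonoid.toList f.1) x y hf) = _ from wordOf_pathOf _ _ _ _,
      FreeMonoid.ofList_toList, SingleObj.toEnd_def]

instance : (Φ A F).EssSurj where
  mem_essImage p := ⟨p.2, ⟨Iso.refl _⟩⟩

end FreeMonoidElementsAux

/-- Let `F` be a set equipped with an action of the free monoid on `A`, i.e. a functor
`SingleObj (FreeMonoid A) ⥤ Type`. Then the category of elements of `F` is free: it is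
equivalent to the path category of the quiver whose vertices are the elements of the
underlying set `F(⋆)` and whose arrows `x ⟶ y` are the letters `a : A` such that the
action of the one-letter word of `a` sends `x` to `y`. -/
theorem elements_of_freeMonoid_action_is_free_category
    (A : Type) (F : SingleObj (FreeMonoid A) ⥤ Type) :
    letI : Quiver (F.obj (SingleObj.star (FreeMonoid A))) :=
      ⟨fun x y =>
        {a : A // F.map (SingleObj.toEnd (FreeMonoid A) (FreeMonoid.of a)) x = y}⟩
    Nonempty (F.Elements ≌ Paths (F.obj (SingleObj.star (FreeMonoid A)))) := by
  letI : Quiver (F.obj (SingleObj.star (FreeMonoid A))) :=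
    ⟨fun x y =>
      {a : A // F.map (SingleObj.toEnd (FreeMonoid A) (FreeMonoid.of a)) x = y}⟩
  haveI : (FreeMonoidElementsAux.Φ A F).IsEquivalence := {}
  exact ⟨((FreeMonoidElementsAux.Φ A F).asEquivalence).symm⟩
end

section
/- Let K be a monoidal closed category and let A, B be objects of K. The category Mly(A,B) of Mealy automata from A to B — whose objects are pairs (X, φ) with X an object of K and φ : A ⊗ X ⟶ X ⊗ B, and whose morphisms (X, φ) → (Y, ψ) are morphisms f : X ⟶ Y of K satisfying (id_A ⊗ f) ≫ ψ = φ ≫ (f ⊗ id_B) — is equivalent to the category of coalgebras for the endofunctor of K sending X to the internal hom [A, X ⊗ B] (the composite of tensoring on the right with B followed by the internal hom out of A). -/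
open CategoryTheory MonoidalCategory

variable (K : Type*) [Category K] [MonoidalCategory K]

/-- A Mealy automaton from `A` to `B` in a monoidal category `K`: an object `X` of states
together with a morphism `φ : A ⊗ X ⟶ X ⊗ B`. -/
structure Mealy (A B : K) where
  X : K
  φ : A ⊗ X ⟶ X ⊗ B

/-- The category of Mealy automata from `A` to `B`: morphisms `(X, φ) → (Y, ψ)` are
morphisms `f : X ⟶ Y` of `K` satisfying `(𝟙 A ⊗ f) ≫ ψ = φ ≫ (f ⊗ 𝟙 B)`. -/
instance Mealy.category (A B : K) : Category (Mealy K A B) where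
  Hom M N := { f : M.X ⟶ N.X // (𝟙 A ⊗ₘ f) ≫ N.φ = M.φ ≫ (f ⊗ₘ 𝟙 B) }
  id M := ⟨𝟙 M.X, by simp⟩
  comp {M N P} f g := ⟨f.1 ≫ g.1, by
    have hf := f.2
    have hg := g.2
    simp only [MonoidalCategory.id_tensorHom, MonoidalCategory.tensorHom_id,
      MonoidalCategory.whiskerLeft_comp, MonoidalCategory.comp_whiskerRight,
      Category.assoc] at hf hg ⊢
    rw [hg, reassoc_of% hf]⟩
  id_comp f := Subtype.ext (Category.id_comp f.1)
  comp_id f := Subtype.ext (Category.comp_id f.1)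
  assoc f g h := Subtype.ext (Category.assoc f.1 g.1 h.1)

lemma mealy_hom_cond [MonoidalClosed K] {A B : K} (M N : Mealy K A B) (f : M.X ⟶ N.X)
    (h : (𝟙 A ⊗ₘ f) ≫ N.φ = M.φ ≫ (f ⊗ₘ 𝟙 B)) :
    f ≫ MonoidalClosed.curry N.φ = MonoidalClosed.curry M.φ ≫ (ihom A).map (f ▷ B) := by
  rw [← MonoidalClosed.curry_natural_left, ← MonoidalClosed.curry_natural_right]
  simp only [id_tensorHom, tensorHom_id] at h
  rw [h]

lemma coalg_hom_cond [MonoidalClosed K] {A B : K} (M N : Mealy K A B) (f : M.X ⟶ N.X)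
    (h : f ≫ MonoidalClosed.curry N.φ = MonoidalClosed.curry M.φ ≫ (ihom A).map (f ▷ B)) :
    (𝟙 A ⊗ₘ f) ≫ N.φ = M.φ ≫ (f ⊗ₘ 𝟙 B) := by
  simp only [id_tensorHom, tensorHom_id]
  have := congrArg MonoidalClosed.uncurry h
  rwa [MonoidalClosed.uncurry_natural_left, MonoidalClosed.uncurry_natural_right,
    MonoidalClosed.uncurry_curry, MonoidalClosed.uncurry_curry] at this

/-- For a monoidal closed category `K` and objects `A B : K`, the category of Mealy
automata from `A` to `B` is equivalent to the category of coalgebras for the endofunctor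
`X ↦ [A, X ⊗ B]`, the composite of tensoring on the right with `B` followed by the
internal hom out of `A`. -/
theorem mealy_equiv_coalgebras [MonoidalClosed K] (A B : K) :
    Nonempty (Mealy K A B ≌ Endofunctor.Coalgebra (tensorRight B ⋙ ihom A)) := by
  refine ⟨CategoryTheory.Equivalence.mk ?_ ?_ ?_ ?_⟩
  · exact
      { obj := fun M => ⟨M.X, MonoidalClosed.curry M.φ⟩
        map := fun {M N} f => ⟨f.1, (mealy_hom_cond K M N f.1 f.2).symm⟩
        map_id := fun M => rfl
        map_comp := fun f g => rfl }
  · exact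
      { obj := fun C => ⟨C.V, MonoidalClosed.uncurry C.str⟩
        map := fun {C D} f =>
          ⟨f.f, coalg_hom_cond K ⟨C.V, MonoidalClosed.uncurry C.str⟩
            ⟨D.V, MonoidalClosed.uncurry D.str⟩ f.f (by
              simpa [MonoidalClosed.curry_uncurry] using f.h.symm)⟩
        map_id := fun C => rfl
        map_comp := fun f g => rfl }
  · exact NatIso.ofComponents (fun M =>
      ⟨⟨𝟙 M.X, by simp [MonoidalClosed.uncurry_curry]⟩,
       ⟨𝟙 M.X, by simp [MonoidalClosed.uncurry_curry]⟩,
       Subtype.ext (show 𝟙 M.X ≫ 𝟙 M.X = 𝟙 M.X from Category.id_comp _),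
       Subtype.ext (show 𝟙 M.X ≫ 𝟙 M.X = 𝟙 M.X from Category.id_comp _)⟩)
      (fun {M N} f => Subtype.ext (show f.1 ≫ 𝟙 N.X = 𝟙 M.X ≫ f.1 by simp))
  · exact NatIso.ofComponents (fun C =>
      ⟨⟨𝟙 C.V, by simp [MonoidalClosed.curry_uncurry]⟩,
       ⟨𝟙 C.V, by simp [MonoidalClosed.curry_uncurry]⟩,
       Endofunctor.Coalgebra.Hom.ext (show 𝟙 C.V ≫ 𝟙 C.V = 𝟙 C.V from Category.id_comp _),
       Endofunctor.Coalgebra.Hom.ext (show 𝟙 C.V ≫ 𝟙 C.V = 𝟙 C.V from Category.id_comp _)⟩)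
      (fun {C D} f => Endofunctor.Coalgebra.Hom.ext (show f.f ≫ 𝟙 D.V = 𝟙 C.V ≫ f.f by simp))
end

section
/- Fix small categories A and C, and let T(A,C) be the category whose objects are pairs (Q, t) with Q a small category and t : A × (Qᵒᵖ × Q) × Cᵒᵖ ⥤ Type a functor, and whose morphisms (P, s) → (Q, t) are pairs (F, θ) with F : P ⥤ Q a functor and θ : s ⟶ ((𝟭_A × (Fᵒᵖ × F) × 𝟭_{Cᵒᵖ}) ⋙ t) a natural transformation, with the evident composition. Then the functor u : Fun(A × Cᵒᵖ, Type) ⥤ T(A,C), sending a profunctor p to the pair consisting of the terminal category and the composite of the projection A × (⋆ᵒᵖ × ⋆) × Cᵒᵖ → A × Cᵒᵖ with p, is fully faithful and admits a left adjoint; the left adjoint sends (Q, t) to the functor A × Cᵒᵖ ⥤ Type obtained as the pointwise colimit over Qᵒᵖ × Q of the currying of t. In particular Fun(A × Cᵒᵖ, Type) is a reflective subcategory of T(A,C). -/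
open CategoryTheory CategoryTheory.Limits

universe u

variable (A C : Type) [SmallCategory A] [SmallCategory C]

/-- An object of the hom-category `2TDX(A, C)` of 2-transducers: a small category `Q` of
states together with a functor `t : A × (Qᵒᵖ × Q) × Cᵒᵖ ⥤ Type`. -/
structure TObj where
  Q : Type
  [cat : SmallCategory Q]
  t : A × (Qᵒᵖ × Q) × Cᵒᵖ ⥤ Type

attribute [instance] TObj.cat

/-- The reindexing functor `𝟭 A × (Fᵒᵖ × F) × 𝟭 Cᵒᵖ` induced by `F : P ⥤ Q`. -/
def remap {P Q : Type} [SmallCategory P] [SmallCategory Q] (F : P ⥤ Q) :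
    A × (Pᵒᵖ × P) × Cᵒᵖ ⥤ A × (Qᵒᵖ × Q) × Cᵒᵖ :=
  (𝟭 A).prod ((F.op.prod F).prod (𝟭 Cᵒᵖ))

/-- A morphism `(P, s) → (Q, t)` of 2-transducers: a functor `F : P ⥤ Q` together with a
natural transformation `θ : s ⟶ (𝟭 A × (Fᵒᵖ × F) × 𝟭 Cᵒᵖ) ⋙ t`. -/
structure THom (X Y : TObj A C) where
  F : X.Q ⥤ Y.Q
  θ : X.t ⟶ remap A C F ⋙ Y.t

/-- The category `T(A,C) = 2TDX(A,C)` of 2-transducers from `A` to `C`. -/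
instance : Category (TObj A C) where
  Hom := THom A C
  id X := ⟨𝟭 X.Q, 𝟙 X.t⟩
  comp {X Y Z} f g := ⟨f.F ⋙ g.F, f.θ ≫ Functor.whiskerLeft (remap A C f.F) g.θ⟩

/-- The projection `A × (Qᵒᵖ × Q) × Cᵒᵖ ⥤ A × Cᵒᵖ`. -/
def projAC (Q : Type) [SmallCategory Q] : A × (Qᵒᵖ × Q) × Cᵒᵖ ⥤ A × Cᵒᵖ :=
  (CategoryTheory.Prod.fst _ _).prod' (CategoryTheory.Prod.snd _ _ ⋙ CategoryTheory.Prod.snd _ _)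

/-- The embedding of profunctors into 2-transducers, sending `p : A × Cᵒᵖ ⥤ Type` to the
2-transducer with terminal state category whose underlying functor is the composite of the
projection with `p`. -/
def tdxOfProf : (A × Cᵒᵖ ⥤ Type) ⥤ TObj A C where
  obj p := ⟨Discrete PUnit, projAC A C (Discrete PUnit) ⋙ p⟩
  map {p p'} α := ⟨𝟭 (Discrete PUnit), Functor.whiskerLeft (projAC A C (Discrete PUnit)) α⟩

/-- The reshuffling functor `(Qᵒᵖ × Q) × (A × Cᵒᵖ) ⥤ A × (Qᵒᵖ × Q) × Cᵒᵖ`. -/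
def shuffle (Q : Type) [SmallCategory Q] :
    (Qᵒᵖ × Q) × (A × Cᵒᵖ) ⥤ A × (Qᵒᵖ × Q) × Cᵒᵖ :=
  (CategoryTheory.Prod.snd _ _ ⋙ CategoryTheory.Prod.fst _ _).prod'
    ((CategoryTheory.Prod.fst _ _).prod' (CategoryTheory.Prod.snd _ _ ⋙ CategoryTheory.Prod.snd _ _))

namespace TdxAux
variable {A C : Type} [SmallCategory A] [SmallCategory C]

noncomputable abbrev GF (X : TObj A C) : (X.Qᵒᵖ × X.Q) ⥤ (A × Cᵒᵖ ⥤ Type) :=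
  Functor.curryObj (shuffle A C X.Q ⋙ X.t)

/-- The cocone on `GF X` with vertex `p` induced by `θ : X.t ⟶ projAC ⋙ p`. -/
def mkCocone (X : TObj A C) (p : A × Cᵒᵖ ⥤ Type) (θ : X.t ⟶ projAC A C X.Q ⋙ p) :
    Cocone (GF X) where
  pt := p
  ι :=
    { app := fun qq =>
        { app := fun ac => θ.app (ac.1, qq, ac.2)
          naturality := fun ac ac' m => θ.naturality ((m.1, 𝟙 qq, m.2) :
              ((ac.1, qq, ac.2) : A × (X.Qᵒᵖ × X.Q) × Cᵒᵖ) ⟶ (ac'.1, qq, ac'.2)) }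
      naturality := fun qq rr u => by
        ext ac a
        have h := types_congr_hom (θ.naturality ((𝟙 ac.1, u, 𝟙 ac.2) :
            ((ac.1, qq, ac.2) : A × (X.Qᵒᵖ × X.Q) × Cᵒᵖ) ⟶ (ac.1, rr, ac.2))) a
        simp only [types_comp_apply] at h
        exact h.trans (types_congr_hom (p.map_id ac) _) }

theorem thom_ext {X : TObj A C} {p : A × Cᵒᵖ ⥤ Type}
    (f g : X ⟶ (tdxOfProf A C).obj p)
    (h : ∀ x : A × (X.Qᵒᵖ × X.Q) × Cᵒᵖ,
      f.θ.app x = (g.θ.app x : X.t.obj x ⟶ p.obj (x.1, x.2.2))) : f = g := by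
  obtain ⟨F, θ⟩ := f
  obtain ⟨G, η⟩ := g
  obtain rfl : F = G := Functor.punit_ext' _ _
  congr 1
  exact NatTrans.ext (funext h)


/-- The cocone used to define `L` on morphisms. -/
noncomputable def mapCocone {X Y : TObj A C} (f : X ⟶ Y) : Cocone (GF X) where
  pt := colimit (GF Y)
  ι :=
    { app := fun qq =>
        { app := fun ac => f.θ.app (ac.1, qq, ac.2) ≫
            (colimit.ι (GF Y) ((f.F.op.prod f.F).obj qq)).app ac
          naturality := fun ac ac' m => by
            ext a
            have h := types_congr_hom (f.θ.naturality ((m.1, 𝟙 qq, m.2) :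
                ((ac.1, qq, ac.2) : A × (X.Qᵒᵖ × X.Q) × Cᵒᵖ) ⟶ (ac'.1, qq, ac'.2))) a
            simp only [TypeCat.Fun.toFun_apply, types_comp_apply] at h ⊢
            have h2 : (remap A C f.F ⋙ Y.t).map ((m.1, 𝟙 qq, m.2) :
                ((ac.1, qq, ac.2) : A × (X.Qᵒᵖ × X.Q) × Cᵒᵖ) ⟶ (ac'.1, qq, ac'.2)) =
                ((GF Y).obj ((f.F.op.prod f.F).obj qq)).map m := by
              show Y.t.map _ = Y.t.map _
              congr 1
              simp [remap, shuffle]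
            rw [h2] at h
            refine (congrArg _ h).trans ?_
            exact types_congr_hom ((colimit.ι (GF Y) ((f.F.op.prod f.F).obj qq)).naturality m) _ }
      naturality := fun qq rr u => by
        ext ac a
        have h := types_congr_hom (f.θ.naturality ((𝟙 ac.1, u, 𝟙 ac.2) :
            ((ac.1, qq, ac.2) : A × (X.Qᵒᵖ × X.Q) × Cᵒᵖ) ⟶ (ac.1, rr, ac.2))) a
        simp only [types_comp_apply] at h
        refine (congrArg _ h).trans ?_
        exact types_congr_hom (congrArg (fun (w : (GF Y).obj _ ⟶ colimit (GF Y)) => w.app ac)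
          (colimit.w (GF Y) ((f.F.op.prod f.F).map u))) _ }

theorem desc_app {X : TObj A C} (c : Cocone (GF X)) (qq : X.Qᵒᵖ × X.Q) (ac : A × Cᵒᵖ)
    (a : ((GF X).obj qq).obj ac) :
    (colimit.desc (GF X) c).app ac ((colimit.ι (GF X) qq).app ac a) =
      (c.ι.app qq).app ac a :=
  types_congr_hom (NatTrans.congr_app (colimit.ι_desc c qq) ac) a

/-- The left adjoint. -/
noncomputable def L : TObj A C ⥤ (A × Cᵒᵖ ⥤ Type) where
  obj X := colimit (GF X)
  map {X Y} f := colimit.desc (GF X) (mapCocone f)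
  map_id X := by
    refine colimit.hom_ext fun qq => ?_
    rw [colimit.ι_desc]
    ext ac a
    rfl
  map_comp {X Y Z} f g := by
    refine colimit.hom_ext fun qq => ?_
    ext ac a
    simp only [NatTrans.comp_app, TypeCat.Fun.toFun_apply, types_comp_apply]
    show (colimit.desc (GF X) (mapCocone (f ≫ g))).app ac ((colimit.ι (GF X) qq).app ac a) =
      (colimit.desc (GF Y) (mapCocone g)).app ac
        ((colimit.desc (GF X) (mapCocone f)).app ac ((colimit.ι (GF X) qq).app ac a))
    rw [desc_app, desc_app]
    exact (desc_app (mapCocone g) ((f.F.op.prod f.F).obj qq) ac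
      (f.θ.app (ac.1, qq, ac.2) a)).symm


theorem L_map {X Y : TObj A C} (f : X ⟶ Y) :
    (L (A := A) (C := C)).map f = colimit.desc (GF X) (mapCocone f) := rfl

/-- The hom-set equivalence of the adjunction. -/
noncomputable def homEquiv (X : TObj A C) (p : A × Cᵒᵖ ⥤ Type) :
    ((L (A := A) (C := C)).obj X ⟶ p) ≃ (X ⟶ (tdxOfProf A C).obj p) where
  toFun g :=
    { F := Functor.star X.Q
      θ :=
        { app := fun x => (colimit.ι (GF X) x.2.1).app (x.1, x.2.2) ≫ g.app (x.1, x.2.2)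
          naturality := fun x y φ => by
            ext a
            simp only [TypeCat.Fun.toFun_apply, types_comp_apply]
            have hdec : ((φ.2.1, 𝟙 ((x.1, x.2.2) : A × Cᵒᵖ)) :
                  ((x.2.1, (x.1, x.2.2)) : (X.Qᵒᵖ × X.Q) × (A × Cᵒᵖ)) ⟶ (y.2.1, (x.1, x.2.2))) ≫
                (𝟙 y.2.1, ((φ.1, φ.2.2) : ((x.1, x.2.2) : A × Cᵒᵖ) ⟶ (y.1, y.2.2))) =
                (show ((x.2.1, (x.1, x.2.2)) : (X.Qᵒᵖ × X.Q) × (A × Cᵒᵖ)) ⟶ (y.2.1, (y.1, y.2.2))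
                  from (φ.2.1, (φ.1, φ.2.2))) :=
              Prod.ext (by simp) (Prod.ext (by simp) (by simp))
            have h1 : X.t.map φ a =
                ((GF X).obj y.2.1).map ((φ.1, φ.2.2) : ((x.1, x.2.2) : A × Cᵒᵖ) ⟶ (y.1, y.2.2))
                  (((GF X).map φ.2.1).app (x.1, x.2.2) a) := by
              have h0 := types_congr_hom ((shuffle A C X.Q ⋙ X.t).map_comp
                  (show ((x.2.1, (x.1, x.2.2)) : (X.Qᵒᵖ × X.Q) × (A × Cᵒᵖ)) ⟶
                      (y.2.1, (x.1, x.2.2)) from (φ.2.1, 𝟙 ((x.1, x.2.2) : A × Cᵒᵖ)))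
                  (show ((y.2.1, (x.1, x.2.2)) : (X.Qᵒᵖ × X.Q) × (A × Cᵒᵖ)) ⟶
                      (y.2.1, (y.1, y.2.2)) from
                    (𝟙 y.2.1, ((φ.1, φ.2.2) : ((x.1, x.2.2) : A × Cᵒᵖ) ⟶ (y.1, y.2.2))))) a
              rw [hdec] at h0
              exact h0
            calc g.app (y.1, y.2.2) ((colimit.ι (GF X) y.2.1).app (y.1, y.2.2) (X.t.map φ a))
                = g.app (y.1, y.2.2) ((colimit.ι (GF X) y.2.1).app (y.1, y.2.2)
                    (((GF X).obj y.2.1).map ((φ.1, φ.2.2) :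
                      ((x.1, x.2.2) : A × Cᵒᵖ) ⟶ (y.1, y.2.2))
                      (((GF X).map φ.2.1).app (x.1, x.2.2) a))) := by rw [h1]
              _ = g.app (y.1, y.2.2) ((colimit (GF X)).map ((φ.1, φ.2.2) :
                      ((x.1, x.2.2) : A × Cᵒᵖ) ⟶ (y.1, y.2.2))
                    ((colimit.ι (GF X) y.2.1).app (x.1, x.2.2)
                      (((GF X).map φ.2.1).app (x.1, x.2.2) a))) :=
                  congrArg _ (types_congr_hom ((colimit.ι (GF X) y.2.1).naturality _) _)
              _ = p.map ((φ.1, φ.2.2) : ((x.1, x.2.2) : A × Cᵒᵖ) ⟶ (y.1, y.2.2))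
                    (g.app (x.1, x.2.2) ((colimit.ι (GF X) y.2.1).app (x.1, x.2.2)
                      (((GF X).map φ.2.1).app (x.1, x.2.2) a))) :=
                  types_congr_hom (g.naturality _) _
              _ = p.map ((φ.1, φ.2.2) : ((x.1, x.2.2) : A × Cᵒᵖ) ⟶ (y.1, y.2.2))
                    (g.app (x.1, x.2.2) ((colimit.ι (GF X) x.2.1).app (x.1, x.2.2) a)) :=
                  congrArg _ (congrArg _ (types_congr_hom
                    (NatTrans.congr_app (colimit.w (GF X) φ.2.1) (x.1, x.2.2)) a)) } }
  invFun f := colimit.desc (GF X) (mkCocone X p f.θ)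
  left_inv g := by
    refine colimit.hom_ext fun qq => ?_
    rw [colimit.ι_desc]
    ext ac a
    rfl
  right_inv f := thom_ext _ _ fun x => by
    ext a
    exact desc_app (mkCocone X p f.θ) x.2.1 (x.1, x.2.2) a

/-- The adjunction `L ⊣ tdxOfProf`. -/
noncomputable def adj : (L (A := A) (C := C)) ⊣ tdxOfProf A C :=
  Adjunction.mkOfHomEquiv
    { homEquiv := homEquiv
      homEquiv_naturality_left_symm := fun {X' X p} f g => by
        refine colimit.hom_ext fun qq => ?_
        ext ac a
        simp only [NatTrans.comp_app, TypeCat.Fun.toFun_apply, types_comp_apply, Equiv.coe_fn_symm_mk, homEquiv, L_map]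
        show (colimit.desc (GF X') (mkCocone X' p (f ≫ g).θ)).app ac ((colimit.ι (GF X') qq).app ac a) =
          (colimit.desc (GF X) (mkCocone X p g.θ)).app ac
            ((colimit.desc (GF X') (mapCocone f)).app ac ((colimit.ι (GF X') qq).app ac a))
        rw [desc_app, desc_app]
        exact (desc_app (mkCocone X p g.θ) ((f.F.op.prod f.F).obj qq) ac
          (f.θ.app (ac.1, qq, ac.2) a)).symm
      homEquiv_naturality_right := fun {X p p'} f g => thom_ext _ _ fun x => rfl }


theorem tdx_full : (tdxOfProf A C).Full where
  map_surjective {p p'} g := by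
    refine ⟨{ app := fun ac => g.θ.app (ac.1, (Opposite.op ⟨PUnit.unit⟩, ⟨PUnit.unit⟩), ac.2)
              naturality := fun ac ac' m => g.θ.naturality
                ((m.1, 𝟙 ((Opposite.op ⟨PUnit.unit⟩, ⟨PUnit.unit⟩) : (Discrete PUnit)ᵒᵖ × Discrete PUnit), m.2) :
                  ((ac.1, (Opposite.op ⟨PUnit.unit⟩, ⟨PUnit.unit⟩), ac.2) :
                    A × ((Discrete PUnit)ᵒᵖ × Discrete PUnit) × Cᵒᵖ) ⟶
                  (ac'.1, (Opposite.op ⟨PUnit.unit⟩, ⟨PUnit.unit⟩), ac'.2)) }, ?_⟩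
    exact thom_ext _ _ fun x => rfl

theorem tdx_faithful : (tdxOfProf A C).Faithful where
  map_injective {p p'} {α β} h := by
    apply NatTrans.ext
    funext ac
    have hθ : ((tdxOfProf A C).map α).θ = ((tdxOfProf A C).map β).θ := by rw [h]
    exact NatTrans.congr_app hθ (ac.1, (Opposite.op ⟨PUnit.unit⟩, ⟨PUnit.unit⟩), ac.2)

end TdxAux


/-- The embedding of profunctors into 2-transducers is fully faithful and admits a left
adjoint, which sends a 2-transducer `(Q, t)` to the pointwise colimit over `Qᵒᵖ × Q` of
the currying of `t`; in particular profunctors form a reflective subcategory of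
2-transducers. -/
theorem tdxOfProf_fullyFaithful_and_reflective :
    (tdxOfProf A C).Full ∧ (tdxOfProf A C).Faithful ∧
    ∃ (L : TObj A C ⥤ (A × Cᵒᵖ ⥤ Type)) (_ : L ⊣ tdxOfProf A C),
      ∀ X : TObj A C,
        Nonempty (L.obj X ≅ colimit (Functor.curryObj (shuffle A C X.Q ⋙ X.t))) := by
  exact ⟨TdxAux.tdx_full, TdxAux.tdx_faithful, TdxAux.L, TdxAux.adj,
    fun X => ⟨Iso.refl _⟩⟩
end
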